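/- Fix n ∈ ℕ and functions k, r : (Fin n → Bool) → ℕ. Assume that |k(S) − k(S')| ≤ 1 for every pair of adjacent states S, S'. Then every exponent d of A occurring in ⟨n,k,r⟩ with nonzero coefficient satisfies −n − 2·k(S_B) ≤ d ≤ n + 2·k(S_A); in particular, if ⟨n,k,r⟩ ≠ 0 then span(⟨n,k,r⟩) := d_max(⟨n,k,r⟩) − d_min(⟨n,k,r⟩) ≤ 2n + 2·k(S_A) + 2·k(S_B). If moreover k(S) ≤ k(S_A) for every state S with exactly one true coordinate and k(S) ≤ k(S_B) for every state S with exactly one false coordinate (adequacy of the diagram), then ⟨n,k,r⟩ ≠ 0 and span(⟨n,k,r⟩) = 2n + 2·k(S_A) + 2·k(S_B). -/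

import Mathlib

/-! Expanding `(-A⁻² - A²)^k` binomially, a state `S` contributes exactly the exponents
`a(S) - b(S) + 2k(S) - 4j` with `0 ≤ j ≤ k(S)`. Since `k` changes by at most one under a single
flip, `k(S) ≤ k(S_A) + b(S)` and `k(S) ≤ k(S_B) + a(S)`, `b(S)` and `a(S)` being the Hamming
distances from `S` to `S_A` and `S_B`; this confines all exponents to
`[-n - 2k(S_B), n + 2k(S_A)]`. Under adequacy the first inequality is strict for `S ≠ S_A`
(walk from `S` to a state at distance one from `S_A`), so the exponent `n + 2k(S_A)` comes from
`S_A` alone, with coefficient `±z^{r(S_A)} ≠ 0`; symmetrically for `-n - 2k(S_B)` and `S_B`. -/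

open Finset

noncomputable section

/-- The ring `(ℤ[z])[A, A⁻¹]`: Laurent polynomials in `A` over `ℤ[z]`. -/
abbrev LP := LaurentPolynomial (Polynomial ℤ)

/-- The homological variable `z`. -/
def zz : LP := LaurentPolynomial.C Polynomial.X

/-- `a(S)`: the number of `A`-smoothings (coordinates where `S` is `false`). -/
def aCount {n : ℕ} (S : Fin n → Bool) : ℕ := (Finset.univ.filter fun i => S i = false).card

/-- `b(S)`: the number of `B`-smoothings (coordinates where `S` is `true`). -/
def bCount {n : ℕ} (S : Fin n → Bool) : ℕ := (Finset.univ.filter fun i => S i = true).card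

/-- Two states are adjacent if they differ in exactly one coordinate. -/
def Adjacent {n : ℕ} (S S' : Fin n → Bool) : Prop :=
  ∃ i : Fin n, S' = Function.update S i (!(S i))

/-- The bracket state sum
`⟨n,k,r⟩ = Σ_S A^(a(S)-b(S)) · (-A⁻² - A²)^(k S) · z^(r S)` in `(ℤ[z])[A,A⁻¹]`,
where `A^m = LaurentPolynomial.T m`. -/
def bracket (n : ℕ) (k r : (Fin n → Bool) → ℕ) : LP :=
  ∑ S : Fin n → Bool,
    LaurentPolynomial.T ((aCount S : ℤ) - (bCount S : ℤ)) *
      (-(LaurentPolynomial.T (-2)) - LaurentPolynomial.T 2) ^ (k S) * zz ^ (r S)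

open LaurentPolynomial

section Hamming

variable {ι β : Type*} [Fintype ι] [DecidableEq ι] [DecidableEq β]

theorem hammingDist_update_add_one {S T : ι → β} {i : ι} (h : S i ≠ T i) :
    hammingDist (Function.update S i (T i)) T + 1 = hammingDist S T := by
  have hfilter : (univ.filter fun j => Function.update S i (T i) j ≠ T j) =
      (univ.filter fun j => S j ≠ T j).erase i := by
    ext j
    by_cases hj : j = i
    · subst hj; simp
    · simp [hj]
  rw [hammingDist, hammingDist, hfilter, card_erase_add_one (by simpa using h)]

end Hamming

section Adjacent

variable {n : ℕ} {f : (Fin n → Bool) → ℤ}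

theorem le_add_hammingDist_of_adjacent
    (hf : ∀ S S' : Fin n → Bool, Adjacent S S' → |f S - f S'| ≤ 1) (S T : Fin n → Bool) :
    f S ≤ f T + hammingDist S T := by
  induction h : hammingDist S T generalizing S with
  | zero => simp [hammingDist_eq_zero.mp h]
  | succ m ih =>
    obtain ⟨i, hi⟩ := Function.ne_iff.mp (hammingDist_ne_zero.mp (by omega) : S ≠ T)
    have hadj : Adjacent S (Function.update S i (T i)) := ⟨i, by rw [Bool.eq_not.mpr hi.symm]⟩
    have hstep := ih (Function.update S i (T i)) (by have := hammingDist_update_add_one hi; omega)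
    have hflip := (abs_le.mp (hf _ _ hadj)).2
    push_cast
    linarith

theorem add_one_le_add_hammingDist_of_adjacent
    (hf : ∀ S S' : Fin n → Bool, Adjacent S S' → |f S - f S'| ≤ 1) {T : Fin n → Bool}
    (hT : ∀ S, hammingDist S T = 1 → f S ≤ f T) {S : Fin n → Bool} (hS : S ≠ T) :
    f S + 1 ≤ f T + hammingDist S T := by
  obtain ⟨i, hi⟩ := Function.ne_iff.mp hS
  set S' := Function.update T i (S i)
  have hS'T : hammingDist S' T = 1 := by
    simpa [S', eq_comm] using
      hammingDist_update_add_one (S := S') (T := T) (i := i) (by simpa [S'] using hi)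
  have hSS' : hammingDist S S' + 1 = hammingDist S T := by
    rw [hammingDist_comm S, hammingDist_comm S]
    exact hammingDist_update_add_one hi.symm
  have hSS'f := le_add_hammingDist_of_adjacent hf S S'
  have hS'f := hT S' hS'T
  push_cast [← hSS']
  linarith

end Adjacent

theorem aCount_eq_hammingDist {n : ℕ} (S : Fin n → Bool) :
    aCount S = hammingDist S (fun _ => true) := by
  simp [aCount, hammingDist]

theorem bCount_eq_hammingDist {n : ℕ} (S : Fin n → Bool) :
    bCount S = hammingDist S (fun _ => false) := by
  simp [bCount, hammingDist]

theorem aCount_const_true {n : ℕ} : aCount (fun _ : Fin n => true) = 0 := by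
  simp [aCount]

theorem bCount_const_false {n : ℕ} : bCount (fun _ : Fin n => false) = 0 := by
  simp [bCount]

theorem aCount_add_bCount {n : ℕ} (S : Fin n → Bool) : aCount S + bCount S = n := by
  simpa [aCount, bCount] using card_filter_add_card_filter_not (s := univ) (fun i => S i = false)

section Laurent

variable {R : Type*} [CommRing R]

theorem T_mul_neg_T_sub_T_pow_mul_C (m : ℤ) (K : ℕ) (p : R) :
    T m * (-T (-2) - T 2) ^ K * C p =
      ∑ j ∈ range (K + 1), C ((-1) ^ K * K.choose j * p) * T (m + 2 * K - 4 * j) := by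
  rw [show (-T (-2) - T 2 : R[T;T⁻¹]) = -(T (-2) + T 2) by ring, neg_pow, add_pow, mul_sum,
    mul_sum, sum_mul]
  refine sum_congr rfl fun j hj => ?_
  have hjK : j ≤ K := Nat.lt_succ_iff.mp (mem_range.mp hj)
  have hexp : (2 * K - 4 * j : ℤ) = j * -2 + ((K - j : ℕ) : ℤ) * 2 := by push_cast [hjK]; ring
  rw [T_pow, T_pow, add_sub_assoc, T_add, map_mul, map_mul, map_pow, map_neg, map_one,
    map_natCast, hexp, T_add]
  ring

theorem coeff_C_mul_T (c : R) (e d : ℤ) : (C c * T e).coeff d = if e = d then c else 0 := by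
  rw [← single_eq_C_mul_T, AddMonoidAlgebra.coeff_single, Finsupp.single_apply]

end Laurent

theorem coeff_bracket (n : ℕ) (k r : (Fin n → Bool) → ℕ) (d : ℤ) :
    (bracket n k r).coeff d = ∑ S : Fin n → Bool, ∑ j ∈ range (k S + 1),
      if (aCount S : ℤ) - bCount S + 2 * k S - 4 * j = d
      then (-1) ^ k S * ((k S).choose j : Polynomial ℤ) * Polynomial.X ^ r S else 0 := by
  simp only [bracket, zz, ← map_pow, T_mul_neg_T_sub_T_pow_mul_C, AddMonoidAlgebra.coeff_sum,
    Finset.sum_apply', coeff_C_mul_T]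

section Bracket

variable {n : ℕ} {k r : (Fin n → Bool) → ℕ}

theorem exists_of_mem_support_bracket {d : ℤ} (hd : d ∈ (bracket n k r).coeff.support) :
    ∃ S : Fin n → Bool, ∃ j ≤ k S, (aCount S : ℤ) - bCount S + 2 * k S - 4 * j = d := by
  rw [Finsupp.mem_support_iff, coeff_bracket] at hd
  obtain ⟨S, -, hS⟩ := exists_ne_zero_of_sum_ne_zero hd
  obtain ⟨j, hj, hSj⟩ := exists_ne_zero_of_sum_ne_zero hS
  exact ⟨S, j, Nat.lt_succ_iff.mp (mem_range.mp hj), of_not_not fun h => hSj (if_neg h)⟩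

theorem mem_support_bracket_of_unique {d : ℤ} (S₀ : Fin n → Bool) (j₀ : ℕ) (hj₀ : j₀ ≤ k S₀)
    (hd : ∀ S, ∀ j ≤ k S, (aCount S : ℤ) - bCount S + 2 * k S - 4 * j = d ↔ S = S₀ ∧ j = j₀) :
    d ∈ (bracket n k r).coeff.support := by
  rw [Finsupp.mem_support_iff, coeff_bracket, sum_eq_single S₀, sum_eq_single j₀, if_pos]
  · refine mul_ne_zero (mul_ne_zero (pow_ne_zero _ (neg_ne_zero.mpr one_ne_zero)) ?_)
      (pow_ne_zero _ Polynomial.X_ne_zero)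
    exact_mod_cast (Nat.choose_pos hj₀).ne'
  · exact (hd S₀ j₀ hj₀).mpr ⟨rfl, rfl⟩
  · exact fun j hj hne => if_neg fun h =>
      hne ((hd S₀ j (Nat.lt_succ_iff.mp (mem_range.mp hj))).mp h).2
  · exact fun h => absurd (mem_range.mpr (Nat.lt_succ_of_le hj₀)) h
  · exact fun S _ hne => sum_eq_zero fun j hj => if_neg fun h =>
      hne ((hd S j (Nat.lt_succ_iff.mp (mem_range.mp hj))).mp h).1
  · exact fun h => absurd (mem_univ S₀) h

theorem support_bracket_subset_Icc
    (hk : ∀ S S' : Fin n → Bool, Adjacent S S' → |(k S : ℤ) - (k S' : ℤ)| ≤ 1) :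
    (bracket n k r).coeff.support ⊆
      Icc (-(n : ℤ) - 2 * k (fun _ => true)) ((n : ℤ) + 2 * k (fun _ => false)) := by
  intro d hd
  obtain ⟨S, j, hj, rfl⟩ := exists_of_mem_support_bracket hd
  have hA := le_add_hammingDist_of_adjacent hk S (fun _ => false)
  have hB := le_add_hammingDist_of_adjacent hk S (fun _ => true)
  have hn := aCount_add_bCount S
  rw [← aCount_eq_hammingDist] at hB
  rw [← bCount_eq_hammingDist] at hA
  exact mem_Icc.mpr ⟨by omega, by omega⟩

theorem upper_bound_mem_support_bracket
    (hk : ∀ S S' : Fin n → Bool, Adjacent S S' → |(k S : ℤ) - (k S' : ℤ)| ≤ 1)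
    (hA : ∀ S : Fin n → Bool, bCount S = 1 → k S ≤ k (fun _ => false)) :
    (n : ℤ) + 2 * k (fun _ => false) ∈ (bracket n k r).coeff.support := by
  have hA₀ := aCount_add_bCount (fun _ : Fin n => false)
  have hA₁ := bCount_const_false (n := n)
  refine mem_support_bracket_of_unique (fun _ => false) 0 (Nat.zero_le _) fun S j hj =>
    ⟨fun hd => ?_, ?_⟩
  · have hn := aCount_add_bCount S
    by_cases hS : S = fun _ => false
    · subst hS
      exact ⟨rfl, by omega⟩
    · have hstrict := add_one_le_add_hammingDist_of_adjacent hk (fun S h => by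
        exact_mod_cast hA S ((bCount_eq_hammingDist S).trans h)) hS
      rw [← bCount_eq_hammingDist] at hstrict
      omega
  · rintro ⟨rfl, rfl⟩
    omega

theorem lower_bound_mem_support_bracket
    (hk : ∀ S S' : Fin n → Bool, Adjacent S S' → |(k S : ℤ) - (k S' : ℤ)| ≤ 1)
    (hB : ∀ S : Fin n → Bool, aCount S = 1 → k S ≤ k (fun _ => true)) :
    -(n : ℤ) - 2 * k (fun _ => true) ∈ (bracket n k r).coeff.support := by
  have hB₀ := aCount_add_bCount (fun _ : Fin n => true)
  have hB₁ := aCount_const_true (n := n)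
  refine mem_support_bracket_of_unique (fun _ => true) _ le_rfl fun S j hj =>
    ⟨fun hd => ?_, ?_⟩
  · have hn := aCount_add_bCount S
    by_cases hS : S = fun _ => true
    · subst hS
      exact ⟨rfl, by omega⟩
    · have hstrict := add_one_le_add_hammingDist_of_adjacent hk (fun S h => by
        exact_mod_cast hB S ((aCount_eq_hammingDist S).trans h)) hS
      rw [← aCount_eq_hammingDist] at hstrict
      omega
  · rintro ⟨rfl, rfl⟩
    omega

end Bracket

/-- Corollary 3.7: if `|k(S) - k(S')| ≤ 1` for adjacent states, then every
exponent of `A` in `⟨n,k,r⟩` lies in `[-n - 2k(S_B), n + 2k(S_A)]`; in particular if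
`⟨n,k,r⟩ ≠ 0` then `span(⟨n,k,r⟩) ≤ 2n + 2k(S_A) + 2k(S_B)`, with equality (and
`⟨n,k,r⟩ ≠ 0`) if the diagram is adequate. -/
theorem span_bracket (n : ℕ) (k r : (Fin n → Bool) → ℕ)
    (hk : ∀ S S' : Fin n → Bool, Adjacent S S' → |(k S : ℤ) - (k S' : ℤ)| ≤ 1) :
    (∀ d ∈ (bracket n k r).coeff.support,
      -(n : ℤ) - 2 * k (fun _ => true) ≤ d ∧ d ≤ (n : ℤ) + 2 * k (fun _ => false)) ∧
    (∀ h0 : bracket n k r ≠ 0,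
      (bracket n k r).coeff.support.max' (Finsupp.support_nonempty_iff.mpr (mt AddMonoidAlgebra.coeff_eq_zero.mp h0)) -
        (bracket n k r).coeff.support.min' (Finsupp.support_nonempty_iff.mpr (mt AddMonoidAlgebra.coeff_eq_zero.mp h0)) ≤
        2 * (n : ℤ) + 2 * k (fun _ => false) + 2 * k (fun _ => true)) ∧
    ((∀ S : Fin n → Bool, bCount S = 1 → k S ≤ k (fun _ => false)) →
      (∀ S : Fin n → Bool, aCount S = 1 → k S ≤ k (fun _ => true)) →
      ∃ h0 : bracket n k r ≠ 0,
        (bracket n k r).coeff.support.max' (Finsupp.support_nonempty_iff.mpr (mt AddMonoidAlgebra.coeff_eq_zero.mp h0)) -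
          (bracket n k r).coeff.support.min' (Finsupp.support_nonempty_iff.mpr (mt AddMonoidAlgebra.coeff_eq_zero.mp h0)) =
          2 * (n : ℤ) + 2 * k (fun _ => false) + 2 * k (fun _ => true)) := by
  have hIcc := support_bracket_subset_Icc (r := r) hk
  refine ⟨fun d hd => mem_Icc.mp (hIcc hd), fun h0 => ?_, fun hA hB => ?_⟩
  · have hne := Finsupp.support_nonempty_iff.mpr (mt AddMonoidAlgebra.coeff_eq_zero.mp h0)
    linarith [(mem_Icc.mp (hIcc (max'_mem _ hne))).2, (mem_Icc.mp (hIcc (min'_mem _ hne))).1]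
  · have htop := upper_bound_mem_support_bracket (r := r) hk hA
    have hbot := lower_bound_mem_support_bracket (r := r) hk hB
    have h0 : bracket n k r ≠ 0 := fun h => by simp [h] at htop
    refine ⟨h0, ?_⟩
    rw [le_antisymm (mem_Icc.mp (hIcc (max'_mem _ _))).2 (le_max' _ _ htop),
      le_antisymm (min'_le _ _ hbot) (mem_Icc.mp (hIcc (min'_mem _ _))).1]
    ring
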